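/- Let ḡ > 0, η̃ ∈ (0,1], b > 0, and define φ(s) = 1/(1 + η̃ḡs) on the interval where 1 + η̃ḡs > 0. Then the inequality φ(s) - s·φ'(s) + (b² - s²)·φ''(s) > 0 holds for all s with |s| ≤ b if and only if b < 1/(2η̃ḡ). -/
import Mathlib


/-- For φ(s) = 1/(1+η̃ḡs), the convexity expression
φ(s) - s·φ'(s) + (b² - s²)·φ''(s) is positive for all |s| ≤ b iff b < 1/(2η̃ḡ). -/
theorem stmt_0 (g η b : ℝ) (hg : 0 < g) (hη : η ∈ Set.Ioc (0:ℝ) 1) (hb : 0 < b) :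
    (∀ s : ℝ, |s| ≤ b →
      0 < (1 + η*g*s)⁻¹ - s * (-(η*g) / (1 + η*g*s)^2)
            + (b^2 - s^2) * (2*η^2*g^2 / (1 + η*g*s)^3))
    ↔ b < 1 / (2*η*g) := by
  obtain ⟨hη0, hη1⟩ := hη
  have hc0 : 0 < η * g := mul_pos hη0 hg
  constructor
  · intro h
    by_contra hb'
    push_neg at hb'
    rw [div_le_iff₀ (by positivity)] at hb'
    have hx := h (-b) (by rw [abs_neg, abs_of_pos hb])
    have e : (1:ℝ) + η*g*(-b) = 1 - η*g*b := by ring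
    rw [e] at hx
    rcases eq_or_ne (1 - η*g*b) 0 with h0 | h0
    · rw [h0] at hx
      simp at hx
    · have key : (1 - η*g*b)⁻¹ - (-b) * (-(η*g) / (1 - η*g*b)^2)
            + (b^2 - (-b)^2) * (2*η^2*g^2 / (1 - η*g*b)^3)
          = (1 - 2*(η*g)*b) / (1 - η*g*b)^2 := by
        field_simp
        ring
      rw [key] at hx
      have hnum : 1 - 2*(η*g)*b ≤ 0 := by nlinarith
      have := div_nonpos_of_nonpos_of_nonneg hnum (sq_nonneg (1 - η*g*b))
      linarith
  · intro hlt s hs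
    obtain ⟨hs1, hs2⟩ := abs_le.mp hs
    rw [lt_div_iff₀ (by positivity)] at hlt
    have hmono := mul_le_mul_of_nonneg_left hs1 hc0.le
    have hu : 0 < 1 + η*g*s := by nlinarith
    have key : (1 + η*g*s)⁻¹ - s * (-(η*g) / (1 + η*g*s)^2)
            + (b^2 - s^2) * (2*η^2*g^2 / (1 + η*g*s)^3)
          = (1 + 3*(η*g)*s + 2*(η*g)^2*b^2) / (1 + η*g*s)^3 := by
      field_simp
      ring
    rw [key]
    apply div_pos ?_ (by positivity)
    nlinarith [mul_pos (show (0:ℝ) < 1 - η*g*b by nlinarith)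
        (show (0:ℝ) < 1 - 2*(η*g)*b by nlinarith)]
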